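/- For every n ≡ 1 or 3 (mod 6) for which a Steiner triple system of order n exists, the minimum over all 2-colourings χ of the 3-subsets of [n] of the maximum over Steiner triple systems S of disc(S, χ) is at most min over integers x with 0 ≤ x ≤ n of |x(n-x)/2 - n(n-1)/12|. -/

import Mathlib

/-- A Steiner triple system of order `n`: a set of 3-element subsets of `Fin n`
such that every 2-element subset lies in exactly one triple. -/
def IsSTS (n : ℕ) (S : Finset (Finset (Fin n))) : Prop :=
  (∀ T ∈ S, T.card = 3) ∧
  ∀ p : Finset (Fin n), p.card = 2 → ∃! T, T ∈ S ∧ p ⊆ T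


/-- Discrepancy of a 2-colouring `χ` on a labelled STS `S`, as a rational. -/
noncomputable def disc (n : ℕ) (S : Finset (Finset (Fin n)))
    (χ : Finset (Fin n) → Bool) : ℚ :=
  max |((S.filter fun T => χ T = true).card : ℚ) - (n * (n - 1)) / 12|
      |((S.filter fun T => χ T = false).card : ℚ) - (n * (n - 1)) / 12|

/-!
Colour a triple blue iff it meets both `X` and its complement, where `#X = x` is optimal.
Every ordered pair of distinct points lies in exactly one triple, so double counting such pairs
gives `6 * #S = n(n-1)`, and double counting the `x(n-x)` pairs of `X ×ˢ Xᶜ` gives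
`2 * #blue = x(n-x)`: a triple with `k` points in `X` contains `k(3-k)` of them, which is `2` for
a blue triple and `0` otherwise. Hence both colour classes deviate from `n(n-1)/12` by exactly
`|x(n-x)/2 - n(n-1)/12|`, whatever the system.
-/

open Finset

lemma card_inter_mul_card_sdiff_of_card_eq_three {α : Type*} [DecidableEq α]
    {T : Finset α} (hT : #T = 3) (X : Finset α) :
    #(T ∩ X) * #(T \ X) = if (T ∩ X).Nonempty ∧ (T \ X).Nonempty then 2 else 0 := by
  have hsplit := card_inter_add_card_sdiff T X
  have hk : #(T ∩ X) ≤ 3 := by omega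
  simp only [← card_pos, show #(T \ X) = 3 - #(T ∩ X) by omega]
  interval_cases #(T ∩ X) <;> simp

namespace IsSTS

variable {n : ℕ} {S : Finset (Finset (Fin n))}

lemma card_filter_mem_mem (hS : IsSTS n S) {a b : Fin n} (hab : a ≠ b) :
    #(S.filter fun T => a ∈ T ∧ b ∈ T) = 1 := by
  obtain ⟨T, hT, huniq⟩ := hS.2 {a, b} (card_pair hab)
  refine card_eq_one.mpr ⟨T, ext fun T' => ?_⟩
  simp only [mem_filter, mem_singleton]
  constructor
  · rintro ⟨hT', ha, hb⟩
    exact huniq T' ⟨hT', by simp [insert_subset_iff, ha, hb]⟩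
  · rintro rfl
    simpa [insert_subset_iff] using hT

lemma card_eq_sum_card_filter (hS : IsSTS n S) (P : Finset (Fin n × Fin n))
    (hP : ∀ ab ∈ P, ab.1 ≠ ab.2) :
    #P = ∑ T ∈ S, #(P.filter fun ab => ab.1 ∈ T ∧ ab.2 ∈ T) := by
  calc #P = ∑ ab ∈ P, #(S.filter fun T => ab.1 ∈ T ∧ ab.2 ∈ T) := by
        rw [card_eq_sum_ones]
        exact sum_congr rfl fun ab hab => (hS.card_filter_mem_mem (hP ab hab)).symm
    _ = _ := sum_card_bipartiteAbove_eq_sum_card_bipartiteBelow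
        fun (ab : Fin n × Fin n) (T : Finset (Fin n)) => ab.1 ∈ T ∧ ab.2 ∈ T

lemma card_eq (hS : IsSTS n S) : (#S : ℚ) = n * (n - 1) / 6 := by
  have hcount := hS.card_eq_sum_card_filter (univ : Finset (Fin n)).offDiag
    fun ab hab => (mem_offDiag.mp hab).2.2
  have hsix : ∀ T ∈ S,
      #(univ.offDiag.filter fun ab : Fin n × Fin n => ab.1 ∈ T ∧ ab.2 ∈ T) = 6 := by
    intro T hT
    calc _ = #T.offDiag := by
          congr 1
          ext ab
          simp only [mem_filter, mem_offDiag, mem_univ, true_and]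
          tauto
      _ = 6 := by rw [offDiag_card, hS.1 T hT]
  rw [sum_congr rfl hsix, sum_const, smul_eq_mul, offDiag_card, card_univ, Fintype.card_fin]
    at hcount
  have : ((n * n - n : ℕ) : ℚ) = #S * 6 := by exact_mod_cast hcount
  push_cast [Nat.le_mul_self n] at this
  linarith

lemma card_filter_crossing (hS : IsSTS n S) (X : Finset (Fin n)) :
    (#(S.filter fun T => (T ∩ X).Nonempty ∧ (T \ X).Nonempty) : ℚ) = #X * (n - #X) / 2 := by
  have hcount := hS.card_eq_sum_card_filter (X ×ˢ Xᶜ) fun ab hab hEq => by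
    simp only [mem_product, mem_compl] at hab
    exact hab.2 (hEq ▸ hab.1)
  have hsplit : ∀ T ∈ S,
      #((X ×ˢ Xᶜ).filter fun ab : Fin n × Fin n => ab.1 ∈ T ∧ ab.2 ∈ T)
        = if (T ∩ X).Nonempty ∧ (T \ X).Nonempty then 2 else 0 := by
    intro T hT
    rw [← card_inter_mul_card_sdiff_of_card_eq_three (hS.1 T hT), ← card_product]
    congr 1
    ext ab
    simp only [mem_filter, mem_product, mem_compl, mem_inter, mem_sdiff]
    tauto
  rw [sum_congr rfl hsplit, ← sum_filter, sum_const, smul_eq_mul, card_product, card_compl,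
    Fintype.card_fin] at hcount
  have : ((#X * (n - #X) : ℕ) : ℚ)
      = #(S.filter fun T => (T ∩ X).Nonempty ∧ (T \ X).Nonempty) * 2 := by
    exact_mod_cast hcount
  push_cast [card_le_univ X |>.trans_eq (Fintype.card_fin n)] at this
  linarith

end IsSTS

lemma disc_eq_of_card_eq {n : ℕ} {S : Finset (Finset (Fin n))} (χ : Finset (Fin n) → Bool)
    (hS : (#S : ℚ) = n * (n - 1) / 6) :
    disc n S χ = |(#(S.filter fun T => χ T = true) : ℚ) - n * (n - 1) / 12| := by
  have hcover := card_filter_add_card_filter_not (s := S) fun T => χ T = true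
  simp only [Bool.not_eq_true] at hcover
  have hfalse : (#(S.filter fun T => χ T = false) : ℚ) - n * (n - 1) / 12
      = -((#(S.filter fun T => χ T = true) : ℚ) - n * (n - 1) / 12) := by
    have : (#(S.filter fun T => χ T = true) : ℚ) + #(S.filter fun T => χ T = false) = #S := by
      exact_mod_cast hcover
    linarith
  rw [disc, hfalse, abs_neg, max_self]

theorem delta2_upper_bound_general (n : ℕ) :
    ∃ χ : Finset (Fin n) → Bool, ∀ S, IsSTS n S →
      disc n S χ ≤ (Finset.range (n + 1)).inf' Finset.nonempty_range_add_one
        (fun x => |((x : ℚ) * ((n : ℚ) - x)) / 2 - (n * (n - 1)) / 12|) := by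
  obtain ⟨x, hx, hmin⟩ := exists_mem_eq_inf' nonempty_range_add_one
    (fun x => |((x : ℚ) * ((n : ℚ) - x)) / 2 - (n * (n - 1)) / 12|)
  obtain ⟨X, -, hX⟩ := exists_subset_card_eq (s := (univ : Finset (Fin n)))
    (by simpa [Nat.lt_succ_iff] using hx)
  refine ⟨fun T => decide ((T ∩ X).Nonempty ∧ (T \ X).Nonempty), fun S hS => ?_⟩
  rw [hmin, disc_eq_of_card_eq _ hS.card_eq]
  simp only [decide_eq_true_eq]
  rw [hS.card_filter_crossing X, hX]

theorem delta2_upper_bound (n : ℕ) (hn : n % 6 = 1 ∨ n % 6 = 3)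
    (hex : ∃ S, IsSTS n S) :
    ∃ χ : Finset (Fin n) → Bool, ∀ S, IsSTS n S →
      disc n S χ ≤ (Finset.range (n + 1)).inf' Finset.nonempty_range_add_one
        (fun x => |((x : ℚ) * ((n : ℚ) - x)) / 2 - (n * (n - 1)) / 12|) :=
  delta2_upper_bound_general n
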